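/- arXiv:2407.13730 — 5 statements merged into one kernel-verified Lean document; each statement's English description precedes it below -/
import Mathlib

section
/- For every finite simple undirected graph G on n vertices without isolated vertices and every damping factor c ∈ (0,1), any vector R ∈ ℝ^n satisfying the graph-normalized PageRank equation R_k = c·Σ_{j=1}^n P_{jk}·R_j + (1−c) for all k is componentwise bounded by the degree vector: R_i ≤ d_i for every vertex i. -/
/-! Let `k` maximise the ratio `R k / d k =: M`. By symmetry the weights `A j k` of the
PageRank equation at `k` sum to `d k`, so `R k ≤ c * d k * M + (1 - c)`, i.e.
`d k * M ≤ c * (d k * M) + (1 - c)`. Since `c < 1` this forces `d k * M ≤ 1`, hence `M ≤ 1`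
because `d k ≥ 1`, and every ratio `R i / d i` is at most `M`. -/

lemma sum_div_mul_le_sum_mul_of_div_le {ι : Type*} [Fintype ι] {w d R : ι → ℝ} {M : ℝ}
    (hw : ∀ j, 0 ≤ w j) (hM : ∀ j, R j / d j ≤ M) :
    ∑ j, w j / d j * R j ≤ (∑ j, w j) * M := by
  rw [Finset.sum_mul]
  refine Finset.sum_le_sum fun j _ => ?_
  rw [div_mul_eq_mul_div, mul_div_assoc]
  exact mul_le_mul_of_nonneg_left (hM j) (hw j)

lemma le_one_of_mul_le_damped {c D M : ℝ} (hc1 : c < 1) (hD : 1 ≤ D)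
    (h : D * M ≤ c * (D * M) + (1 - c)) : M ≤ 1 := by
  have hDM : D * M ≤ 1 := by nlinarith
  by_contra! hM
  nlinarith

theorem pagerank_le_degree_general
    {n : ℕ} (A : Fin n → Fin n → ℝ)
    (hA01 : ∀ i j, A i j = 0 ∨ A i j = 1)
    (hAsymm : ∀ i j, A i j = A j i)
    (d : Fin n → ℝ) (hd : ∀ i, d i = ∑ j, A i j)
    (hd1 : ∀ i, 1 ≤ d i)
    (c : ℝ) (hc0 : 0 < c) (hc1 : c < 1)
    (R : Fin n → ℝ)
    (hR : ∀ k, R k = c * ∑ j, (A j k / d j) * R j + (1 - c)) :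
    ∀ i, R i ≤ d i := by
  intro i
  have : Nonempty (Fin n) := ⟨i⟩
  obtain ⟨k, hk⟩ := Finite.exists_max fun j => R j / d j
  have hA0 : ∀ j, 0 ≤ A j k := fun j => by rcases hA01 j k with h | h <;> simp [h]
  have hcol : ∑ j, A j k = d k := by simp only [hd k, hAsymm _ k]
  have hRk : R k = d k * (R k / d k) := by
    rw [mul_div_cancel₀ _ (by linarith [hd1 k])]
  have hM : R k / d k ≤ 1 := by
    refine le_one_of_mul_le_damped hc1 (hd1 k) ?_
    calc d k * (R k / d k) = R k := hRk.symm
      _ = c * ∑ j, A j k / d j * R j + (1 - c) := hR k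
      _ ≤ c * (d k * (R k / d k)) + (1 - c) := by
        gcongr
        exact (sum_div_mul_le_sum_mul_of_div_le hA0 hk).trans_eq (by rw [hcol])
  exact (div_le_one (by linarith [hd1 i])).mp ((hk i).trans hM)

/-- **PageRank is at most the degree.** For every finite simple undirected graph on `n`
vertices without isolated vertices (adjacency matrix `A` with `0/1` entries, symmetric,
zero diagonal, degrees `d i = ∑ j, A i j ≥ 1`) and every damping factor `c ∈ (0,1)`,
any vector `R` satisfying the graph-normalized PageRank equation
`R k = c * ∑ j, (A j k / d j) * R j + (1 - c)` satisfies `R i ≤ d i` for every vertex `i`. -/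
theorem pagerank_le_degree
    {n : ℕ} (A : Fin n → Fin n → ℝ)
    (hA01 : ∀ i j, A i j = 0 ∨ A i j = 1)
    (hAsymm : ∀ i j, A i j = A j i)
    (hAdiag : ∀ i, A i i = 0)
    (d : Fin n → ℝ) (hd : ∀ i, d i = ∑ j, A i j)
    (hd1 : ∀ i, 1 ≤ d i)
    (c : ℝ) (hc0 : 0 < c) (hc1 : c < 1)
    (R : Fin n → ℝ)
    (hR : ∀ k, R k = c * ∑ j, (A j k / d j) * R j + (1 - c)) :
    ∀ i, R i ≤ d i :=
  pagerank_le_degree_general A hA01 hAsymm d hd hd1 c hc0 hc1 R hR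
end

section
/- Let G be a finite simple undirected graph on n vertices without isolated vertices, c ∈ (0,1), and let R ∈ ℝ^n satisfy the graph-normalized PageRank equation. Let α > 0, ε ∈ (0,1), k > 0, and let i be a vertex such that the number of neighbors j of i with d_j < α is at least ε·d_i, and such that d_i > α·k/(ε·c·(1−c)). Then R_i > k. -/
/-!
Choosing `j₀` minimising `R j / d j`, the PageRank equation and the symmetry of `A` give
`R j₀ ≥ c R j₀ + (1 - c)`, so the minimum is positive and `R > 0`. The equation then gives
`R j ≥ 1 - c` for every `j`, and each neighbour `j` of `i` with `d j < α` contributes more than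
`c (1 - c) / α` to `R i`. There are at least `ε d i` such neighbours, and
`c (1 - c) ε d i / α > k` is exactly the degree assumption.
-/

open Finset

section PageRank

variable {ι : Type*} {A : ι → ι → ℝ} {d : ι → ℝ} {c : ℝ} {R : ι → ℝ}

theorem card_mul_le_sum_of_degree_lt {α : ℝ} (hd : ∀ j, 0 < d j) (hc1 : c < 1)
    (hRge : ∀ j, 1 - c ≤ R j) {S : Finset ι} {i : ι}
    (hS : ∀ j ∈ S, A j i = 1 ∧ d j < α) :
    #S * ((1 - c) / α) ≤ ∑ j ∈ S, A j i / d j * R j := by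
  rw [← nsmul_eq_mul]
  refine card_nsmul_le_sum S _ _ fun j hj => ?_
  obtain ⟨hAji, hdj⟩ := hS j hj
  calc (1 - c) / α ≤ (1 - c) / d j := div_le_div_of_nonneg_left (by linarith) (hd j) hdj.le
    _ ≤ R j / d j := by gcongr; exacts [(hd j).le, hRge j]
    _ = A j i / d j * R j := by rw [hAji]; ring

variable [Fintype ι]

theorem pagerank_pos (hA : ∀ i j, 0 ≤ A i j) (hcol : ∀ k, ∑ j, A j k = d k)
    (hd : ∀ j, 0 < d j) (hc0 : 0 ≤ c) (hc1 : c < 1)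
    (hR : ∀ k, R k = c * ∑ j, A j k / d j * R j + (1 - c)) (i : ι) : 0 < R i := by
  obtain ⟨j₀, -, hj₀⟩ := exists_min_image univ (fun j => R j / d j) ⟨i, mem_univ i⟩
  set m := R j₀ / d j₀
  have hRj₀ : R j₀ = d j₀ * m := by rw [mul_div_cancel₀ _ (hd j₀).ne']
  have hmin_le : ∀ j, d j * m ≤ R j := fun j => by
    have := hj₀ j (mem_univ j)
    rwa [le_div_iff₀ (hd j), mul_comm] at this
  have hsum : ∀ k, d k * m ≤ ∑ j, A j k / d j * R j := fun k => by
    rw [← hcol, sum_mul]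
    refine sum_le_sum fun j _ => ?_
    calc A j k * m = A j k / d j * (d j * m) := by field_simp [(hd j).ne']
      _ ≤ A j k / d j * R j := by gcongr; exacts [div_nonneg (hA j k) (hd j).le, hmin_le j]
  have hdm : 1 ≤ d j₀ * m := by
    nlinarith [hR j₀, hRj₀, mul_le_mul_of_nonneg_left (hsum j₀) hc0]
  have hm : 0 < m := pos_of_mul_pos_right (one_pos.trans_le hdm) (hd j₀).le
  exact (mul_pos (hd i) hm).trans_le (hmin_le i)

theorem pagerank_ge_partial_sum (hA : ∀ i j, 0 ≤ A i j) (hd : ∀ j, 0 ≤ d j) (hc0 : 0 ≤ c)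
    (hRnonneg : ∀ j, 0 ≤ R j) (hR : ∀ k, R k = c * ∑ j, A j k / d j * R j + (1 - c))
    (S : Finset ι) (k : ι) : c * ∑ j ∈ S, A j k / d j * R j + (1 - c) ≤ R k := by
  rw [hR k]
  gcongr c * ?_ + _
  exact sum_le_sum_of_subset_of_nonneg (subset_univ S) fun j _ _ =>
    mul_nonneg (div_nonneg (hA j k) (hd j)) (hRnonneg j)

theorem one_sub_le_pagerank (hA : ∀ i j, 0 ≤ A i j) (hd : ∀ j, 0 ≤ d j) (hc0 : 0 ≤ c)
    (hRnonneg : ∀ j, 0 ≤ R j) (hR : ∀ k, R k = c * ∑ j, A j k / d j * R j + (1 - c))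
    (k : ι) : 1 - c ≤ R k := by
  simpa using pagerank_ge_partial_sum hA hd hc0 hRnonneg hR ∅ k

end PageRank

theorem pagerank_exceeds_of_many_small_neighbors_general
    {n : ℕ} (A : Fin n → Fin n → ℝ)
    (hA01 : ∀ i j, A i j = 0 ∨ A i j = 1)
    (hAsymm : ∀ i j, A i j = A j i)
    (d : Fin n → ℝ) (hd : ∀ i, d i = ∑ j, A i j)
    (hd1 : ∀ i, 1 ≤ d i)
    (c : ℝ) (hc0 : 0 < c) (hc1 : c < 1)
    (R : Fin n → ℝ)
    (hR : ∀ k, R k = c * ∑ j, (A j k / d j) * R j + (1 - c))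
    (α ε k : ℝ) (hα : 0 < α) (hε0 : 0 < ε)
    (i : Fin n)
    (hsmall : ε * d i ≤ ((univ.filter (fun j => A i j = 1 ∧ d j < α)).card : ℝ))
    (hdeg : α * k / (ε * c * (1 - c)) < d i) :
    k < R i := by
  have hA : ∀ a b, 0 ≤ A a b := fun a b => by rcases hA01 a b with h | h <;> simp [h]
  have hdpos : ∀ j, 0 < d j := fun j => one_pos.trans_le (hd1 j)
  have hcol : ∀ k, ∑ j, A j k = d k := fun k => by simp only [hd k, hAsymm]
  have hRpos : ∀ j, 0 < R j := pagerank_pos hA hcol hdpos hc0.le hc1 hR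
  have hRge := one_sub_le_pagerank hA (fun j => (hdpos j).le) hc0.le (fun j => (hRpos j).le) hR
  set S := univ.filter (fun j => A i j = 1 ∧ d j < α)
  have hS : ∀ j ∈ S, A j i = 1 ∧ d j < α := fun j hj => by
    rw [hAsymm]; exact (mem_filter.1 hj).2
  have hc1' : 0 < 1 - c := by linarith
  calc k < c * (ε * d i * ((1 - c) / α)) := by
        rw [div_lt_iff₀ (by positivity)] at hdeg
        rw [show c * (ε * d i * ((1 - c) / α)) = d i * (ε * c * (1 - c)) / α by ring,
          lt_div_iff₀ hα]
        linarith
    _ ≤ c * (#S * ((1 - c) / α)) := by gcongr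
    _ ≤ c * ∑ j ∈ S, A j i / d j * R j := by
        gcongr; exact card_mul_le_sum_of_degree_lt hdpos hc1 hRge hS
    _ < R i := by
        linarith [pagerank_ge_partial_sum hA (fun j => (hdpos j).le) hc0.le
          (fun j => (hRpos j).le) hR S i]

/-- If at least `ε·d i` neighbors `j` of the vertex `i` have degree `d j < α`, and
`d i > α·k/(ε·c·(1-c))`, then the PageRank of `i` exceeds `k`. -/
theorem pagerank_exceeds_of_many_small_neighbors
    {n : ℕ} (A : Fin n → Fin n → ℝ)
    (hA01 : ∀ i j, A i j = 0 ∨ A i j = 1)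
    (hAsymm : ∀ i j, A i j = A j i)
    (hAdiag : ∀ i, A i i = 0)
    (d : Fin n → ℝ) (hd : ∀ i, d i = ∑ j, A i j)
    (hd1 : ∀ i, 1 ≤ d i)
    (c : ℝ) (hc0 : 0 < c) (hc1 : c < 1)
    (R : Fin n → ℝ)
    (hR : ∀ k, R k = c * ∑ j, (A j k / d j) * R j + (1 - c))
    (α ε k : ℝ) (hα : 0 < α) (hε0 : 0 < ε) (hε1 : ε < 1) (hk : 0 < k)
    (i : Fin n)
    (hsmall : ε * d i ≤ ((univ.filter (fun j => A i j = 1 ∧ d j < α)).card : ℝ))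
    (hdeg : α * k / (ε * c * (1 - c)) < d i) :
    k < R i :=
  pagerank_exceeds_of_many_small_neighbors_general A hA01 hAsymm d hd hd1 c hc0 hc1 R hR α ε k hα
    hε0 i hsmall hdeg
end

section
/- Let m ≥ 1 be an integer, δ a real number with δ > −m, τ := 3 + δ/m, and let n ≥ m be an integer. Then (1/(τ−1)) · ( Γ(n+δ) / ((n−m)! · Γ(m+δ)) ) · ∫_0^1 (1 − x^{1/(τ−1)})^{n−m} · x^{(m+δ+2−τ)/(τ−1)} dx = (m+δ)/((n+δ)(n+δ+1)), where Γ denotes the real Gamma function. -/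
/-! Substituting `x = u ^ (τ - 1)` turns the integral into `(τ - 1) · B(m + δ + 1, n - m + 1)`;
writing the Beta function through Gamma functions, everything cancels by `Γ(s + 1) = s Γ(s)`. -/

open Real Set MeasureTheory

theorem integral_rpow_mul_one_sub_rpow_eq_beta {a b : ℝ} (ha : 0 < a) (hb : 0 < b) :
    ∫ x in (0 : ℝ)..1, x ^ (a - 1) * (1 - x) ^ (b - 1) = ProbabilityTheory.beta a b := by
  rw [ProbabilityTheory.beta_eq_betaIntegralReal a b ha hb, Complex.betaIntegral,
    ← Complex.ofReal_re (∫ x in (0 : ℝ)..1, _), ← intervalIntegral.integral_ofReal]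
  congr 1
  refine intervalIntegral.integral_congr fun x hx => ?_
  rw [uIcc_of_le zero_le_one] at hx
  push_cast
  rw [Complex.ofReal_cpow hx.1, Complex.ofReal_cpow (sub_nonneg.2 hx.2)]
  push_cast
  rfl

theorem rpow_image_Ioc_zero_one {p : ℝ} (hp : 0 < p) : (· ^ p) '' Ioc 0 1 = Ioc (0 : ℝ) 1 := by
  ext y
  constructor
  · rintro ⟨x, ⟨hx0, hx1⟩, rfl⟩
    exact ⟨rpow_pos_of_pos hx0 p, rpow_le_one hx0.le hx1 hp.le⟩
  · rintro ⟨hy0, hy1⟩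
    refine ⟨y ^ p⁻¹, ⟨rpow_pos_of_pos hy0 _, rpow_le_one hy0.le hy1 (inv_nonneg.2 hp.le)⟩, ?_⟩
    exact rpow_inv_rpow hy0.le hp.ne'

theorem integral_comp_rpow_zero_one {E : Type*} [NormedAddCommGroup E] [NormedSpace ℝ E]
    (g : ℝ → E) {p : ℝ} (hp : 0 < p) :
    ∫ x in (0 : ℝ)..1, (p * x ^ (p - 1)) • g (x ^ p) = ∫ y in (0 : ℝ)..1, g y := by
  rw [intervalIntegral.integral_of_le zero_le_one, intervalIntegral.integral_of_le zero_le_one]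
  conv_rhs => rw [← rpow_image_Ioc_zero_one hp, integral_image_eq_integral_abs_deriv_smul
    measurableSet_Ioc (fun x hx => (hasDerivAt_rpow_const (Or.inl hx.1.ne')).hasDerivWithinAt)
    ((rpow_left_injOn hp.ne').mono fun x (hx : x ∈ Ioc (0 : ℝ) 1) => hx.1.le)]
  refine setIntegral_congr_fun measurableSet_Ioc fun x (hx : x ∈ Ioc (0 : ℝ) 1) => ?_
  rw [abs_of_nonneg (by have := hx.1; positivity)]

theorem integral_one_sub_rpow_inv_pow_mul_rpow {a c : ℝ} (ha : 0 < a) (hc : 0 < c) (k : ℕ) :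
    ∫ x in (0 : ℝ)..1, (1 - x ^ (1 / a)) ^ k * x ^ ((c + 1 - a) / a)
      = a * ProbabilityTheory.beta (c + 1) (k + 1) := by
  rw [← integral_comp_rpow_zero_one _ ha,
    ← integral_rpow_mul_one_sub_rpow_eq_beta (by positivity) (by positivity),
    ← intervalIntegral.integral_const_mul]
  refine intervalIntegral.integral_congr fun u hu => ?_
  have hu0 : 0 ≤ u := by
    rw [uIcc_of_le zero_le_one] at hu
    exact hu.1
  have hpow : u ^ (a - 1) * u ^ (c + 1 - a) = u ^ c := by
    rw [← rpow_add' hu0 (by ring_nf; exact hc.ne')]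
    ring_nf
  simp only [smul_eq_mul]
  rw [← rpow_mul hu0, ← rpow_mul hu0, mul_one_div_cancel ha.ne', rpow_one,
    mul_div_cancel₀ _ ha.ne', add_sub_cancel_right, add_sub_cancel_right, rpow_natCast]
  linear_combination a * (1 - u) ^ k * hpow

theorem Real.Gamma_add_two {x : ℝ} (hx : x ≠ 0) (hx1 : x + 1 ≠ 0) :
    Gamma (x + 2) = x * (x + 1) * Gamma x := by
  rw [show x + 2 = x + 1 + 1 by ring, Gamma_add_one hx1, Gamma_add_one hx]
  ring

/-- **Degree distribution of younger children of the root in the Pólya point tree.**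
For an integer `m ≥ 1`, a real `δ > -m`, `τ = 3 + δ/m`, and an integer `n ≥ m`,
`(1/(τ-1)) · (Γ(n+δ)/((n-m)!·Γ(m+δ))) · ∫_0^1 (1-x^{1/(τ-1)})^{n-m}·x^{(m+δ+2-τ)/(τ-1)} dx
  = (m+δ)/((n+δ)(n+δ+1))`. -/
theorem polya_degree_pmf
    (m : ℕ) (hm : 1 ≤ m) (δ : ℝ) (hδ : -(m : ℝ) < δ)
    (τ : ℝ) (hτ : τ = 3 + δ / m)
    (n : ℕ) (hn : m ≤ n) :
    (1 / (τ - 1)) * (Real.Gamma ((n : ℝ) + δ) / (((n - m).factorial : ℝ) * Real.Gamma ((m : ℝ) + δ)))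
        * ∫ x in (0:ℝ)..1, (1 - x ^ ((1 : ℝ) / (τ - 1))) ^ (n - m)
            * x ^ (((m : ℝ) + δ + 2 - τ) / (τ - 1))
      = ((m : ℝ) + δ) / (((n : ℝ) + δ) * ((n : ℝ) + δ + 1)) := by
  have hc : 0 < (m : ℝ) + δ := by linarith
  have ha : 0 < τ - 1 := by
    have : -1 < δ / m := (lt_div_iff₀ (by exact_mod_cast hm)).2 (by linarith)
    rw [hτ]
    linarith
  have hnδ : (n : ℝ) + δ = (m + δ) + (n - m : ℕ) := by push_cast [Nat.cast_sub hn]; ring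
  have hck : 0 < (m : ℝ) + δ + (n - m : ℕ) := by positivity
  rw [show (m + δ + 2 - τ) / (τ - 1) = ((m + δ) + 1 - (τ - 1)) / (τ - 1) by ring,
    integral_one_sub_rpow_inv_pow_mul_rpow ha hc, ProbabilityTheory.beta,
    Gamma_add_one hc.ne', Gamma_nat_eq_factorial,
    show (m : ℝ) + δ + 1 + ((n - m : ℕ) + 1) = (m + δ + (n - m : ℕ)) + 2 by ring,
    Gamma_add_two hck.ne' (by positivity), hnδ]
  have hΓc := Gamma_pos_of_pos hc
  have hΓck := Gamma_pos_of_pos hck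
  field_simp
end

section
/- Let G be a finite simple directed graph on n vertices with all in-degrees d⁻_i ≥ 1 and all out-degrees d⁺_i ≥ 1, and let c ∈ (0,1). Suppose there are real numbers K > 0 and m ≥ 1 such that d⁻_i ≤ K·d⁺_i and d⁻_i ≥ m for all i, and such that c·K < 1. Then the unique solution R of the directed graph-normalized PageRank equation R_k = c·Σ_{j=1}^n P_{jk}·R_j + (1−c) satisfies R_i ≤ ((1−c)/(m·(1−cK)))·d⁻_i for every vertex i. -/
/-- **Upper bound on directed PageRank for bounded ratio of in- and out-degrees.**
For a finite simple directed graph (adjacency matrix `A` with `0/1` entries and zero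
diagonal) with in-degrees `din i = ∑ j, A j i ≥ 1` and out-degrees `dout i = ∑ j, A i j ≥ 1`,
damping factor `c ∈ (0,1)`, and reals `K > 0`, `m ≥ 1` with `din i ≤ K·dout i`,
`m ≤ din i` and `c·K < 1`, any solution of the directed graph-normalized PageRank equation
satisfies `R i ≤ ((1-c)/(m·(1-c·K)))·din i` for every vertex `i`. -/
theorem directed_pagerank_upper_bound
    {n : ℕ} (A : Fin n → Fin n → ℝ)
    (hA01 : ∀ i j, A i j = 0 ∨ A i j = 1)
    (hAdiag : ∀ i, A i i = 0)
    (din dout : Fin n → ℝ)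
    (hdin : ∀ i, din i = ∑ j, A j i) (hdout : ∀ i, dout i = ∑ j, A i j)
    (hdin1 : ∀ i, 1 ≤ din i) (hdout1 : ∀ i, 1 ≤ dout i)
    (c : ℝ) (hc0 : 0 < c) (hc1 : c < 1)
    (K m : ℝ) (hK : 0 < K) (hm : 1 ≤ m)
    (hratio : ∀ i, din i ≤ K * dout i)
    (hmin : ∀ i, m ≤ din i)
    (hcK : c * K < 1)
    (R : Fin n → ℝ)
    (hR : ∀ k, R k = c * ∑ j, (A j k / dout j) * R j + (1 - c)) :
    ∀ i, R i ≤ ((1 - c) / (m * (1 - c * K))) * din i := by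
  intro i
  have hdinpos : ∀ j, 0 < din j := fun j => lt_of_lt_of_le one_pos (hdin1 j)
  have hdoutpos : ∀ j, 0 < dout j := fun j => lt_of_lt_of_le one_pos (hdout1 j)
  have hm0 : 0 < m := lt_of_lt_of_le one_pos hm
  have hcK' : 0 < 1 - c * K := by linarith
  have hA0 : ∀ a b, 0 ≤ A a b := by
    intro a b; rcases hA01 a b with h | h <;> rw [h] <;> norm_num
  set v : Fin n → ℝ := fun j => R j / din j with hv
  have hRv : ∀ j, R j = v j * din j := by
    intro j
    rw [hv]
    field_simp [(hdinpos j).ne']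
  -- find the minimum of v
  obtain ⟨k, -, hk⟩ := Finset.exists_min_image Finset.univ v ⟨i, Finset.mem_univ i⟩
  have hkle : ∀ j, v k ≤ v j := fun j => hk j (Finset.mem_univ j)
  -- minimum is nonnegative
  have hvk0 : 0 ≤ v k := by
    by_contra h
    push_neg at h
    have hsum : din k * (K * v k) ≤ ∑ j, (A j k / dout j) * R j := by
      calc din k * (K * v k) = ∑ j, A j k * (K * v k) := by
            rw [← Finset.sum_mul, ← hdin k]
        _ ≤ ∑ j, (A j k / dout j) * R j := by
            apply Finset.sum_le_sum
            intro j _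
            have hRj : v k * din j ≤ R j := by
              have := hkle j
              rw [hRv j]
              exact mul_le_mul_of_nonneg_right this (hdinpos j).le
            rw [div_mul_eq_mul_div, le_div_iff₀ (hdoutpos j)]
            nlinarith [mul_le_mul_of_nonneg_left hRj (hA0 j k),
              mul_nonneg (mul_nonneg (hA0 j k) (neg_nonneg.2 h.le))
                (sub_nonneg.2 (hratio j))]
    have hRk := hR k
    have hx : v k * din k < 0 := mul_neg_of_neg_of_pos h (hdinpos k)
    have hRk' : v k * din k = c * ∑ j, (A j k / dout j) * R j + (1 - c) := by
      rw [← hRv k]; exact hRk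
    nlinarith [mul_le_mul_of_nonneg_left hsum hc0.le,
      mul_neg_of_neg_of_pos hx hcK']
  -- find the maximum of v
  obtain ⟨t, -, ht⟩ := Finset.exists_max_image Finset.univ v ⟨i, Finset.mem_univ i⟩
  have htle : ∀ j, v j ≤ v t := fun j => ht j (Finset.mem_univ j)
  have hvt0 : 0 ≤ v t := le_trans hvk0 (htle k)
  -- bound the maximum
  have hsum : ∑ j, (A j t / dout j) * R j ≤ din t * (K * v t) := by
    calc ∑ j, (A j t / dout j) * R j ≤ ∑ j, A j t * (K * v t) := by
          apply Finset.sum_le_sum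
          intro j _
          have hvj0 : 0 ≤ v j := le_trans hvk0 (hkle j)
          have hRj : R j ≤ v t * din j := by
            have := htle j
            rw [hRv j]
            exact mul_le_mul_of_nonneg_right this (hdinpos j).le
          rw [div_mul_eq_mul_div, div_le_iff₀ (hdoutpos j)]
          nlinarith [mul_le_mul_of_nonneg_left hRj (hA0 j t),
            mul_nonneg (mul_nonneg (hA0 j t) hvt0) (sub_nonneg.2 (hratio j))]
      _ = din t * (K * v t) := by rw [← Finset.sum_mul, ← hdin t]
  have hRt' : v t * din t = c * ∑ j, (A j t / dout j) * R j + (1 - c) := by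
    rw [← hRv t]; exact hR t
  have hvtB : v t ≤ (1 - c) / (m * (1 - c * K)) := by
    rw [le_div_iff₀ (mul_pos hm0 hcK')]
    nlinarith [mul_le_mul_of_nonneg_left hsum hc0.le,
      mul_le_mul_of_nonneg_left (hmin t) (mul_nonneg hvt0 hcK'.le)]
  have hvi : v i ≤ (1 - c) / (m * (1 - c * K)) := le_trans (htle i) hvtB
  rw [hRv i]
  exact mul_le_mul_of_nonneg_right hvi (hdinpos i).le
end

section
/- Let G be a finite simple directed Eulerian graph on n vertices, i.e. d⁻_i = d⁺_i ≥ 1 for every vertex i, and let c ∈ (0,1). Then the unique solution R of the directed graph-normalized PageRank equation R_k = c·Σ_{j=1}^n P_{jk}·R_j + (1−c) satisfies R_i ≤ d⁻_i for every vertex i. -/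
/-- **PageRank of Eulerian directed graphs is bounded by the degree.** For a finite simple
directed graph in which every vertex has equal in- and out-degree, both at least 1
(an Eulerian graph), and a damping factor `c ∈ (0,1)`, any solution of the directed
graph-normalized PageRank equation satisfies `R i ≤ din i` for every vertex `i`. -/
theorem eulerian_pagerank_le_degree
    {n : ℕ} (A : Fin n → Fin n → ℝ)
    (hA01 : ∀ i j, A i j = 0 ∨ A i j = 1)
    (hAdiag : ∀ i, A i i = 0)
    (din dout : Fin n → ℝ)
    (hdin : ∀ i, din i = ∑ j, A j i) (hdout : ∀ i, dout i = ∑ j, A i j)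
    (heul : ∀ i, din i = dout i)
    (hdin1 : ∀ i, 1 ≤ din i)
    (c : ℝ) (hc0 : 0 < c) (hc1 : c < 1)
    (R : Fin n → ℝ)
    (hR : ∀ k, R k = c * ∑ j, (A j k / dout j) * R j + (1 - c)) :
    ∀ i, R i ≤ din i := by
  intro i
  haveI : Nonempty (Fin n) := ⟨i⟩
  have hdpos : ∀ j, (0:ℝ) < din j := fun j => lt_of_lt_of_le one_pos (hdin1 j)
  have hAnn : ∀ j k, (0:ℝ) ≤ A j k := by
    intro j k; rcases hA01 j k with h | h <;> simp [h]
  obtain ⟨k₀, hk₀⟩ := Finite.exists_max (fun k => R k / din k)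
  -- bound the sum at k₀
  have hsum : ∑ j, (A j k₀ / dout j) * R j ≤ din k₀ * (R k₀ / din k₀) := by
    have : ∀ j, (A j k₀ / dout j) * R j ≤ A j k₀ * (R k₀ / din k₀) := by
      intro j
      have h1 : (A j k₀ / dout j) * R j = A j k₀ * (R j / din j) := by
        rw [heul j]; ring
      rw [h1]
      exact mul_le_mul_of_nonneg_left (hk₀ j) (hAnn j k₀)
    calc ∑ j, (A j k₀ / dout j) * R j ≤ ∑ j, A j k₀ * (R k₀ / din k₀) :=
          Finset.sum_le_sum (fun j _ => this j)
      _ = (∑ j, A j k₀) * (R k₀ / din k₀) := by rw [Finset.sum_mul]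
      _ = din k₀ * (R k₀ / din k₀) := by rw [hdin k₀]
  have hdk : din k₀ * (R k₀ / din k₀) = R k₀ := by
    rw [mul_comm, div_mul_cancel₀ _ (hdpos k₀).ne']
  have hRk : R k₀ ≤ c * R k₀ + (1 - c) := by
    calc R k₀ = c * ∑ j, (A j k₀ / dout j) * R j + (1 - c) := hR k₀
      _ ≤ c * (din k₀ * (R k₀ / din k₀)) + (1 - c) := by
          have := mul_le_mul_of_nonneg_left hsum hc0.le
          linarith
      _ = c * R k₀ + (1 - c) := by rw [hdk]
  have hRk1 : R k₀ ≤ 1 := by nlinarith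
  have hfk : R k₀ / din k₀ ≤ 1 := by
    rw [div_le_one (hdpos k₀)]
    exact hRk1.trans (hdin1 k₀)
  have := (hk₀ i).trans hfk
  have := (div_le_one (hdpos i)).mp this
  linarith
end
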